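/- Let t, η ≥ 1 and ζ ≥ 2 be integers with t dividing ζ. Let G be a graph not containing K_{t,t} as a subgraph, and let (T, r) be a (ζ, η)-uniform rooted tree that is a subgraph of G. Then at most ζ^η (t−1) vertices of V(G) ∖ V(T) are t-bad for (T, r). -/

import Mathlib

open Set

private lemma ncard_biUnion_le' {α β : Type*} [Finite β] (s : Finset α) (f : α → Set β) :
    (⋃ i ∈ s, f i).ncard ≤ ∑ i ∈ s, (f i).ncard := by
  classical
  induction s using Finset.induction with
  | empty => simp
  | insert a s h ih =>
    rw [Finset.set_biUnion_insert, Finset.sum_insert h]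
    exact le_trans (Set.ncard_union_le _ _) (by gcongr)

private lemma exists_parent {V : Type*} {G : SimpleGraph V} (hc : G.Connected)
    {r v : V} {d : ℕ} (hd : G.dist r v = d + 1) :
    ∃ u, G.Adj u v ∧ G.dist r u = d := by
  obtain ⟨p, hp⟩ := hc.exists_walk_length_eq_dist r v
  cases p with
  | nil => rw [hd] at hp; simp at hp
  | cons h q =>
    obtain ⟨x, q', h', heq⟩ := SimpleGraph.Walk.exists_cons_eq_concat h q
    have hlen : q'.length + 1 = d + 1 := by
      rw [← SimpleGraph.Walk.length_concat q' h', ← heq, hp, hd]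
    have h1 : G.dist r x ≤ d := by
      have := SimpleGraph.dist_le q'
      omega
    have h2 : d + 1 ≤ G.dist r x + 1 := by
      obtain ⟨p2, hp2⟩ := hc.exists_walk_length_eq_dist r x
      have := SimpleGraph.dist_le (p2.concat h')
      rw [SimpleGraph.Walk.length_concat, hp2] at this
      omega
    exact ⟨x, h', by omega⟩

private lemma geom_sum_le_pow {ζ : ℕ} (hζ : 2 ≤ ζ) (n : ℕ) :
    ∑ d ∈ Finset.range n, ζ ^ d ≤ ζ ^ n := by
  induction n with
  | zero => simp
  | succ n ih =>
    rw [Finset.sum_range_succ, pow_succ]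
    have : ζ ^ n * 2 ≤ ζ ^ n * ζ := by gcongr
    omega

/-- `G` contains the complete bipartite graph `K_{s,t}` as a (not necessarily
induced) subgraph. -/
def ContainsKst {V : Type*} (G : SimpleGraph V) (s t : ℕ) : Prop :=
  ∃ A B : Finset V, A.card = s ∧ B.card = t ∧ Disjoint A B ∧
    ∀ a ∈ A, ∀ b ∈ B, G.Adj a b

/-- The children of `u` in the tree `T` rooted at `r`. -/
def children {V : Type*} (T : SimpleGraph V) (r u : V) : Set V :=
  {v | T.Adj u v ∧ T.dist r v = T.dist r u + 1}

/-- A rooted tree `(T, r)` is `(ζ, η)`-uniform. -/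
def IsUniform {V : Type*} (T : SimpleGraph V) (r : V) (ζ η : ℕ) : Prop :=
  (∀ u, (children T r u).Nonempty → (children T r u).ncard = ζ) ∧
  (∀ u, children T r u = ∅ → T.dist r u = η)

/-- A vertex `u` of `G` is `t`-bad for the rooted tree `(T, r)` on the vertex
set `TS ⊆ V(G)`: some vertex `w` of `T` with exactly `ζ` children has more than
`(t−1)ζ/t` of its children `G`-adjacent to `u`. -/
def TBad {V : Type*} (G : SimpleGraph V) {TS : Set V} (T : SimpleGraph TS)
    (r : TS) (t ζ : ℕ) (u : V) : Prop :=
  ∃ w : TS, (children T r w).ncard = ζ ∧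
    (t - 1) * ζ < t * {v ∈ children T r w | G.Adj u v}.ncard

/-- Let `t, η ≥ 1` and `ζ ≥ 2` with `t ∣ ζ`. Let `G` contain no `K_{t,t}`
subgraph, and let `(T, r)` be a `(ζ, η)`-uniform rooted tree on the vertex set
`TS`, a subgraph of `G`. Then at most `ζ^η·(t−1)` vertices outside `TS` are
`t`-bad for `(T, r)`. -/
theorem stmt_11 {V : Type*} [Fintype V] (G : SimpleGraph V)
    (t ζ η : ℕ) (ht : 1 ≤ t) (hζ : 2 ≤ ζ) (hη : 1 ≤ η) (hdvd : t ∣ ζ)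
    (hK : ¬ ContainsKst G t t)
    (TS : Set V) (T : SimpleGraph TS) (r : TS)
    (htree : T.IsTree)
    (hsub : ∀ u v : TS, T.Adj u v → G.Adj u v)
    (hunif : IsUniform T r ζ η) :
    {u : V | u ∉ TS ∧ TBad G T r t ζ u}.ncard ≤ ζ ^ η * (t - 1) := by
  classical
  have hconn : T.Connected := htree.isConnected
  have hfinTS : Finite TS := Subtype.finite
  have hchildle : ∀ u : TS, (children T r u).ncard ≤ ζ := by
    intro u
    rcases Set.eq_empty_or_nonempty (children T r u) with h | h
    · simp [h]
    · exact le_of_eq (hunif.1 u h)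
  -- level bound
  have hlevel : ∀ d : ℕ, {w : TS | T.dist r w = d}.ncard ≤ ζ ^ d := by
    intro d
    induction d with
    | zero =>
      have hs : {w : TS | T.dist r w = 0} ⊆ {r} := by
        intro w hw
        have := (hconn.dist_eq_zero_iff).mp hw
        simp [← this]
      calc {w : TS | T.dist r w = 0}.ncard ≤ ({r} : Set TS).ncard :=
            Set.ncard_le_ncard hs (Set.toFinite _)
        _ = 1 := Set.ncard_singleton r
        _ ≤ ζ ^ 0 := by simp
    | succ d ih =>
      set L : Set TS := {w : TS | T.dist r w = d} with hL
      have hsub2 : {w : TS | T.dist r w = d + 1} ⊆ ⋃ u ∈ L.toFinite.toFinset, children T r u := by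
        intro v hv
        obtain ⟨u, hadj, hdu⟩ := exists_parent hconn hv
        exact Set.mem_biUnion (L.toFinite.mem_toFinset.mpr hdu) ⟨hadj, by rw [hdu]; exact hv⟩
      calc {w : TS | T.dist r w = d + 1}.ncard
          ≤ (⋃ u ∈ L.toFinite.toFinset, children T r u).ncard :=
            Set.ncard_le_ncard hsub2 (Set.toFinite _)
        _ ≤ ∑ u ∈ L.toFinite.toFinset, (children T r u).ncard := ncard_biUnion_le' _ _
        _ ≤ L.toFinite.toFinset.card • ζ := Finset.sum_le_card_nsmul _ _ _ (fun u _ => hchildle u)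
        _ = L.ncard * ζ := by rw [smul_eq_mul, Set.ncard_eq_toFinset_card L L.toFinite]
        _ ≤ ζ ^ d * ζ := by gcongr
        _ = ζ ^ (d + 1) := (pow_succ ζ d).symm
  -- internal vertices have depth < η
  have hdepth : ∀ w : TS, (children T r w).Nonempty → T.dist r w < η := by
    have : Nonempty TS := ⟨r⟩
    obtain ⟨M, hM⟩ := Finite.exists_max (fun w : TS => T.dist r w)
    have hMempty : children T r M = ∅ := by
      by_contra h
      obtain ⟨v, hv⟩ := Set.nonempty_iff_ne_empty.mpr h
      have := hM v
      rw [hv.2] at this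
      omega
    have hMd : T.dist r M = η := hunif.2 M hMempty
    intro w ⟨v, hv⟩
    have h1 := hM v
    rw [hMd] at h1
    rw [hv.2] at h1
    omega
  -- per internal vertex: at most t-1 bad vertices
  have hbad : ∀ w : TS, (children T r w).ncard = ζ →
      {u : V | u ∉ TS ∧ (t - 1) * ζ < t * {v ∈ children T r w | G.Adj u v}.ncard}.ncard ≤ t - 1 := by
    intro w hw
    by_contra hcon
    push_neg at hcon
    obtain ⟨m, hm⟩ := hdvd
    have hm1 : 1 ≤ m := by
      rcases Nat.eq_zero_or_pos m with h | h
      · rw [h, mul_zero] at hm; omega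
      · exact h
    set Badw : Set V :=
      {u : V | u ∉ TS ∧ (t - 1) * ζ < t * {v ∈ children T r w | G.Adj u v}.ncard} with hBadw
    have hge : t ≤ Badw.ncard := by omega
    obtain ⟨A0, hA0sub, hA0card⟩ := Set.exists_subset_card_eq hge
    set Miss : V → Set TS := fun u => children T r w \ {v ∈ children T r w | G.Adj u v} with hMiss
    have hMissle : ∀ u ∈ A0, (Miss u).ncard ≤ m - 1 := by
      intro u hu
      obtain ⟨-, hineq⟩ := hA0sub hu
      have hsplit : (Miss u).ncard + {v ∈ children T r w | G.Adj u v}.ncard = ζ := by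
        rw [hMiss]
        rw [Set.ncard_diff_add_ncard_of_subset (Set.sep_subset _ _) (Set.toFinite _), hw]
      have h1 : t * (Miss u).ncard < ζ := by
        have := Nat.mul_le_mul_left t (le_of_eq hsplit)
        rw [Nat.mul_add] at this
        have h2 : (t - 1) * ζ + ζ = t * ζ := by
          obtain ⟨t', rfl⟩ : ∃ t', t = t' + 1 := ⟨t - 1, by omega⟩
          simp only [Nat.add_sub_cancel]
          ring
        omega
      have h3 : (Miss u).ncard < m := by
        refine Nat.lt_of_mul_lt_mul_left (a := t) ?_
        rw [← hm]; exact h1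
      omega
    set A : Finset V := A0.toFinite.toFinset with hA
    have hAcard : A.card = t := by
      rw [hA, ← Set.ncard_eq_toFinset_card _ A0.toFinite, hA0card]
    set U : Set TS := ⋃ u ∈ A, Miss u with hU
    have hUcard : U.ncard ≤ ζ - t := by
      calc U.ncard ≤ ∑ u ∈ A, (Miss u).ncard := ncard_biUnion_le' _ _
        _ ≤ A.card • (m - 1) := Finset.sum_le_card_nsmul _ _ _
            (fun u hu => hMissle u (A0.toFinite.mem_toFinset.mp hu))
        _ = t * (m - 1) := by rw [hAcard, smul_eq_mul]
        _ ≤ ζ - t := by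
            obtain ⟨m', rfl⟩ : ∃ m', m = m' + 1 := ⟨m - 1, by omega⟩
            have : t * m' + t = ζ := by rw [hm]; ring
            simp only [Nat.add_sub_cancel]
            omega
    have hcommon : t ≤ (children T r w \ U).ncard := by
      have h5 := Set.ncard_le_ncard_diff_add_ncard (children T r w) U (Set.toFinite _)
      rw [hw] at h5
      have htζ : t ≤ ζ := by
        rw [hm]; exact Nat.le_mul_of_pos_right t hm1
      omega
    obtain ⟨B0, hB0sub, hB0card⟩ := Set.exists_subset_card_eq hcommon
    refine hK ⟨A, (Subtype.val '' B0).toFinite.toFinset, hAcard, ?_, ?_, ?_⟩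
    · rw [← Set.ncard_eq_toFinset_card _ (Subtype.val '' B0).toFinite,
        Set.ncard_image_of_injective _ Subtype.val_injective, hB0card]
    · rw [Finset.disjoint_left]
      intro a ha hb
      have ha' : a ∉ TS := (hA0sub (A0.toFinite.mem_toFinset.mp ha)).1
      obtain ⟨v, -, rfl⟩ := (Set.Finite.mem_toFinset _).mp hb
      exact ha' v.2
    · intro a ha b hb
      obtain ⟨v, hv, rfl⟩ := (Set.Finite.mem_toFinset _).mp hb
      obtain ⟨hvc, hvU⟩ := hB0sub hv
      have hvm : v ∉ Miss a := fun hmem => hvU (Set.mem_biUnion ha hmem)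
      have : v ∈ {v ∈ children T r w | G.Adj a v} := by
        by_contra h
        exact hvm ⟨hvc, h⟩
      exact this.2
  -- combine
  set Internal : Set TS := {w : TS | (children T r w).ncard = ζ} with hI
  have hIcard : Internal.ncard ≤ ζ ^ η := by
    have hIsub : Internal ⊆ ⋃ d ∈ Finset.range η, {w : TS | T.dist r w = d} := by
      intro w hw
      have hne : (children T r w).Nonempty := by
        apply Set.nonempty_of_ncard_ne_zero
        rw [hw]; omega
      exact Set.mem_biUnion (Finset.mem_range.mpr (hdepth w hne)) rfl
    calc Internal.ncard ≤ (⋃ d ∈ Finset.range η, {w : TS | T.dist r w = d}).ncard :=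
          Set.ncard_le_ncard hIsub (Set.toFinite _)
      _ ≤ ∑ d ∈ Finset.range η, {w : TS | T.dist r w = d}.ncard := ncard_biUnion_le' _ _
      _ ≤ ∑ d ∈ Finset.range η, ζ ^ d := Finset.sum_le_sum (fun d _ => hlevel d)
      _ ≤ ζ ^ η := geom_sum_le_pow hζ η
  have hmain : {u : V | u ∉ TS ∧ TBad G T r t ζ u} ⊆
      ⋃ w ∈ Internal.toFinite.toFinset,
        {u : V | u ∉ TS ∧ (t - 1) * ζ < t * {v ∈ children T r w | G.Adj u v}.ncard} := by
    rintro u ⟨hu, w, hw1, hw2⟩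
    exact Set.mem_biUnion (Internal.toFinite.mem_toFinset.mpr hw1) ⟨hu, hw2⟩
  calc {u : V | u ∉ TS ∧ TBad G T r t ζ u}.ncard
      ≤ (⋃ w ∈ Internal.toFinite.toFinset,
        {u : V | u ∉ TS ∧ (t - 1) * ζ < t * {v ∈ children T r w | G.Adj u v}.ncard}).ncard :=
        Set.ncard_le_ncard hmain (Set.toFinite _)
    _ ≤ ∑ w ∈ Internal.toFinite.toFinset,
        {u : V | u ∉ TS ∧ (t - 1) * ζ < t * {v ∈ children T r w | G.Adj u v}.ncard}.ncard :=
        ncard_biUnion_le' _ _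
    _ ≤ Internal.toFinite.toFinset.card • (t - 1) := Finset.sum_le_card_nsmul _ _ _
        (fun w hw => hbad w (Internal.toFinite.mem_toFinset.mp hw))
    _ = Internal.ncard * (t - 1) := by rw [smul_eq_mul, Set.ncard_eq_toFinset_card _ Internal.toFinite]
    _ ≤ ζ ^ η * (t - 1) := by gcongr
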